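/- For any μ ∈ (0, 1/2] there exists f_μ > 0 such that for all 0 < f < f_μ and all θ ∈ ℝ, the polynomial g_θ(r) = 2r³ + 2r - 4(1-2μ)r² cosθ - f(r² - 2r cosθ + 1)(r² + 2r cosθ + 1) has exactly two real roots, both of which are positive. -/

import Mathlib

/-- The quartic `g_θ(r) = 2r³ + 2r - 4(1-2μ)r²cosθ - f(r² - 2r cosθ + 1)(r² + 2r cosθ + 1)`. -/
noncomputable def gQuartic (μ f θ r : ℝ) : ℝ :=
  2*r^3 + 2*r - 4*(1-2*μ)*r^2*Real.cos θ
    - f*(r^2 - 2*r*Real.cos θ + 1)*(r^2 + 2*r*Real.cos θ + 1)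

/-!
`g_θ` is palindromic: with `t = r + 1/r` one has `g_θ(r) = -r² ψ(t)` for the quadratic
`ψ(t) = f t² - 2t + 4(1-2μ) cos θ - 4f cos² θ`. For small `f`, `ψ(2) < 0 < ψ(-2)`, so `ψ` has one
root `t₁ ∈ (-2, 2)`, which no real `r` attains, and one root `t₂ > 2`, attained by exactly two
positive reciprocal values of `r`. Equivalently, `g_θ` factors as
`-f (r² - t₁ r + 1)(r² - t₂ r + 1)` with a positive definite first factor.
-/

open Real

lemma exists_roots_lt_lt_of_quadratic_neg {a b c x₀ : ℝ} (ha : 0 < a)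
    (h : a * x₀ ^ 2 + b * x₀ + c < 0) :
    ∃ t₁ t₂ : ℝ, t₁ < x₀ ∧ x₀ < t₂ ∧ a * (t₁ + t₂) = -b ∧ a * (t₁ * t₂) = c := by
  have hdisc : (2 * a * x₀ + b) ^ 2 < discrim a b c := by
    rw [discrim]; nlinarith
  set s := √(discrim a b c)
  have hs : s ^ 2 = discrim a b c := sq_sqrt ((sq_nonneg _).trans hdisc.le)
  have hlt : |2 * a * x₀ + b| < s := abs_lt_of_sq_lt_sq (hs ▸ hdisc) (sqrt_nonneg _)
  obtain ⟨hlo, hhi⟩ := abs_lt.mp hlt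
  refine ⟨(-b - s) / (2 * a), (-b + s) / (2 * a), ?_, ?_, ?_, ?_⟩
  · rw [div_lt_iff₀ (by positivity)]; linarith
  · rw [lt_div_iff₀ (by positivity)]; linarith
  · field_simp; ring
  · field_simp
    rw [discrim] at hs
    linear_combination -hs

lemma sq_sub_mul_add_one_pos {t : ℝ} (ht : |t| < 2) (r : ℝ) : 0 < r ^ 2 - t * r + 1 := by
  have ht2 : t ^ 2 < 2 ^ 2 := sq_lt_sq' (abs_lt.mp ht).1 (abs_lt.mp ht).2
  nlinarith [sq_nonneg (2 * r - t)]

lemma gQuartic_eq_mul {μ f θ t₁ t₂ : ℝ} (hsum : f * (t₁ + t₂) = 2)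
    (hprod : f * (t₁ * t₂) = 4 * (1 - 2 * μ) * cos θ - 4 * f * cos θ ^ 2) (r : ℝ) :
    gQuartic μ f θ r = -f * (r ^ 2 - t₁ * r + 1) * (r ^ 2 - t₂ * r + 1) := by
  unfold gQuartic
  linear_combination -(r ^ 3 + r) * hsum + r ^ 2 * hprod

section ReducedQuadratic

variable {μ f c : ℝ}

lemma reduced_quadratic_neg_at_two (hμ : μ ≤ 1 / 2) (hf : 0 ≤ f) (hfμ : f < 2 * μ)
    (hc : |c| ≤ 1) : f * 2 ^ 2 + -2 * 2 + (4 * (1 - 2 * μ) * c - 4 * f * c ^ 2) < 0 := by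
  obtain ⟨hc₁, hc₂⟩ := abs_le.mp hc
  nlinarith [mul_nonneg (by linarith : 0 ≤ 1 - 2 * μ) (by linarith : 0 ≤ 1 - c),
    mul_nonneg hf (sq_nonneg c)]

lemma reduced_quadratic_pos_at_neg_two (hμ0 : 0 < μ) (hμ : μ ≤ 1 / 2) (hf : 0 ≤ f)
    (hc : |c| ≤ 1) : 0 < f * (-2) ^ 2 + -2 * (-2) + (4 * (1 - 2 * μ) * c - 4 * f * c ^ 2) := by
  obtain ⟨hc₁, hc₂⟩ := abs_le.mp hc
  nlinarith [mul_nonneg (by linarith : 0 ≤ 1 - 2 * μ) (by linarith : 0 ≤ 1 + c),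
    mul_nonneg hf (by nlinarith : 0 ≤ 1 - c ^ 2)]

end ReducedQuadratic

/-- For any `μ ∈ (0, 1/2]` there exists `f_μ > 0` such that for all `0 < f < f_μ` and all
`θ`, the polynomial `g_θ` has exactly two real roots, both positive. -/
theorem gQuartic_two_positive_roots (μ : ℝ) (hμ0 : 0 < μ) (hμ : μ ≤ 1/2) :
    ∃ fμ : ℝ, 0 < fμ ∧ ∀ f : ℝ, 0 < f → f < fμ → ∀ θ : ℝ,
      ∃ r₁ r₂ : ℝ, 0 < r₁ ∧ 0 < r₂ ∧ r₁ ≠ r₂ ∧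
        gQuartic μ f θ r₁ = 0 ∧ gQuartic μ f θ r₂ = 0 ∧
        ∀ r : ℝ, gQuartic μ f θ r = 0 → r = r₁ ∨ r = r₂ := by
  refine ⟨2 * μ, by linarith, fun f hf hfμ θ => ?_⟩
  have hc := abs_cos_le_one θ
  obtain ⟨t₁, t₂, ht₁, ht₂, hsum, hprod⟩ :=
    exists_roots_lt_lt_of_quadratic_neg hf (reduced_quadratic_neg_at_two hμ hf.le hfμ hc)
  have ht₁_gt : -2 < t₁ := by
    have hψ : 0 < f * ((t₁ + 2) * (t₂ + 2)) := by
      linear_combination reduced_quadratic_pos_at_neg_two hμ0 hμ hf.le hc - 2 * hsum - hprod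
    have := pos_of_mul_pos_left (pos_of_mul_pos_right hψ hf.le) (by linarith)
    linarith
  have ht₁_pos := sq_sub_mul_add_one_pos (abs_lt.mpr ⟨ht₁_gt, by linarith⟩)
  obtain ⟨r₁, r₂, hr₁, hr₂, hrsum, hrprod⟩ :=
    exists_roots_lt_lt_of_quadratic_neg one_pos (show 1 * 1 ^ 2 + -t₂ * 1 + 1 < 0 by linarith)
  have hr₁_pos : 0 < r₁ := pos_of_mul_pos_left (by linarith : 0 < r₁ * r₂) (by linarith)
  have hg : ∀ r, gQuartic μ f θ r = -f * (r ^ 2 - t₁ * r + 1) * ((r - r₁) * (r - r₂)) := by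
    intro r
    rw [gQuartic_eq_mul (by linarith) hprod]
    linear_combination (-f * (r ^ 2 - t₁ * r + 1)) * (r * hrsum - hrprod)
  refine ⟨r₁, r₂, hr₁_pos, by linarith, by linarith, by simp [hg], by simp [hg], fun r hr => ?_⟩
  rw [hg] at hr
  simpa [sub_eq_zero, hf.ne', (ht₁_pos r).ne'] using hr
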